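/- Let (f_n)_{n≥1} be a sequence of increasing, differentiable functions from an interval [a,b] ⊂ (0,∞) to [0, M], and suppose there is a constant c₀ > 0 such that for all n ≥ 1 and all λ ∈ [a,b], f_n(λ) ≤ c₀ · ((Σ_{k=0}^{n-1} f_k(λ))/n) · f_n'(λ), where f₀ ≡ is some fixed bounded increasing function. If additionally f_n(λ) ≥ f_{n+1}(λ) for all n and λ, then there exists λ* ∈ [a,b] such that for every λ < λ* in [a,b] there are constants M', c > 0 with f_n(λ) ≤ M'·e^{-cn} for all n, and for every λ > λ* in [a,b] one has lim_n f_n(λ) ≥ C(λ - λ*) for some constant C > 0 independent of λ. -/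

import Mathlib

open Filter Topology

lemma harmonic_le_log (n : ℕ) :
    ∑ k ∈ Finset.range n, (1:ℝ)/(k+1) ≤ Real.log n + 1 := by
  induction n with
  | zero => simp
  | succ n ih =>
    rcases Nat.eq_zero_or_pos n with rfl | hn
    · simp
    rw [Finset.sum_range_succ]
    have hlog : (1:ℝ)/((n:ℝ)+1) ≤ Real.log ((n:ℝ)+1) - Real.log (n:ℝ) := by
      have hpos : (0:ℝ) < ((n:ℝ)+1)/n := by positivity
      have := Real.one_sub_inv_le_log_of_pos hpos
      rw [Real.log_div (by positivity) (by exact_mod_cast hn.ne')] at this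
      have hn' : (0:ℝ) < n := by exact_mod_cast hn
      have h2 : 1 - (n:ℝ)/((n:ℝ)+1) ≤ Real.log ((n:ℝ)+1) - Real.log n := by
        have hinv : (((n:ℝ)+1)/n)⁻¹ = (n:ℝ)/((n:ℝ)+1) := by
          field_simp
        rw [hinv] at this; exact this
      have heq : 1 - (n:ℝ)/((n:ℝ)+1) = 1/((n:ℝ)+1) := by field_simp; ring
      rw [heq] at h2
      linarith
    push_cast at ih ⊢
    linarith

lemma summable_exp_rpow {c δ : ℝ} (hc : 0 < c) (hδ : 0 < δ) :
    Summable fun k : ℕ => Real.exp (-(c * (k:ℝ) ^ δ)) := by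
  have h := (isLittleO_log_rpow_atTop hδ).def (by positivity : (0:ℝ) < c/2)
  rw [Filter.eventually_atTop] at h
  obtain ⟨X, hX⟩ := h
  apply summable_of_isBigO_nat (Real.summable_one_div_nat_pow.mpr one_lt_two)
  rw [Asymptotics.isBigO_iff]
  refine ⟨1, ?_⟩
  rw [Filter.eventually_atTop]
  refine ⟨max 1 ⌈X⌉₊, fun n hn => ?_⟩
  have hn1 : 1 ≤ n := le_trans (le_max_left _ _) hn
  have hnX : X ≤ (n:ℝ) := by
    calc X ≤ (⌈X⌉₊:ℝ) := Nat.le_ceil X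
    _ ≤ (n:ℝ) := by exact_mod_cast le_trans (le_max_right _ _) hn
  have hnpos : (0:ℝ) < (n:ℝ) := by exact_mod_cast hn1
  have hlog := hX (n:ℝ) hnX
  rw [Real.norm_eq_abs, Real.norm_eq_abs, abs_of_nonneg (Real.log_nonneg (by exact_mod_cast hn1)),
    abs_of_nonneg (Real.rpow_nonneg hnpos.le δ)] at hlog
  have key : 2 * Real.log n ≤ c * (n:ℝ)^δ := by linarith
  have h2 : Real.exp (-(c * (n:ℝ)^δ)) ≤ Real.exp (-(2 * Real.log n)) := by
    apply Real.exp_le_exp.mpr; linarith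
  have h3 : Real.exp (-(2 * Real.log n)) = 1/(n:ℝ)^2 := by
    rw [Real.exp_neg, show (2:ℝ) * Real.log n = Real.log ((n:ℝ)^(2:ℕ)) by
      rw [Real.log_pow]; push_cast; ring,
      Real.exp_log (by positivity), one_div]
  rw [Real.norm_eq_abs, Real.norm_eq_abs, abs_of_pos (Real.exp_pos _), one_mul,
    abs_of_pos (by positivity : (0:ℝ) < 1/(n:ℝ)^2)]
  rw [h3] at h2; exact h2

lemma deriv_nonneg_of_monotoneOn {g : ℝ → ℝ} {u v x : ℝ} (hux : u ≤ x) (hxv : x < v)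
    (hg : MonotoneOn g (Set.Icc u v)) {d : ℝ} (hd : HasDerivAt g d x) : 0 ≤ d := by
  have h1 : Tendsto (slope g x) (𝓝[>] x) (𝓝 d) :=
    (hasDerivAt_iff_tendsto_slope.mp hd).mono_left
      (nhdsWithin_mono x (fun t ht => ht.ne'))
  refine ge_of_tendsto h1 ?_
  filter_upwards [Ioo_mem_nhdsGT_of_mem ⟨le_refl x, hxv⟩] with t ht
  rw [slope_def_field]
  have hx : x ∈ Set.Icc u v := ⟨hux, hxv.le⟩
  have ht' : t ∈ Set.Icc u v := ⟨hux.trans ht.1.le, ht.2.le⟩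
  have := hg hx ht' ht.1.le
  rw [div_eq_mul_inv]
  exact mul_nonneg (by linarith) (inv_nonneg.mpr (by linarith [ht.1]))

lemma exp_decay_of_deriv_ge {g : ℝ → ℝ} {x y r B : ℝ} (hxy : x ≤ y) (hB : 0 ≤ B)
    (hcont : ContinuousOn g (Set.Icc x y))
    (hdiffg : ∀ μ ∈ Set.Ioo x y, DifferentiableAt ℝ g μ)
    (hder : ∀ μ ∈ Set.Ioo x y, r * g μ ≤ deriv g μ)
    (hgy : g y ≤ B) : g x ≤ B * Real.exp (-(r * (y - x))) := by
  set h : ℝ → ℝ := fun μ => g μ * Real.exp (-(r * μ)) with hh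
  have hd : ∀ μ ∈ Set.Ioo x y,
      HasDerivAt h (deriv g μ * Real.exp (-(r*μ)) + g μ * (Real.exp (-(r*μ)) * (-r))) μ := by
    intro μ hμ
    have h1 : HasDerivAt (fun μ : ℝ => -(r*μ)) (-r) μ := by
      simpa using ((hasDerivAt_id μ).const_mul r).fun_neg
    exact ((hdiffg μ hμ).hasDerivAt).mul h1.exp
  have hmon : MonotoneOn h (Set.Icc x y) := by
    apply monotoneOn_of_deriv_nonneg (convex_Icc x y)
    · exact hcont.mul (Real.continuous_exp.comp (by continuity)).continuousOn
    · rw [interior_Icc]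
      exact fun μ hμ => ((hd μ hμ).differentiableAt).differentiableWithinAt
    · rw [interior_Icc]
      intro μ hμ
      rw [(hd μ hμ).deriv]
      have := hder μ hμ
      have hexp : (0:ℝ) < Real.exp (-(r*μ)) := Real.exp_pos _
      nlinarith
  have hxy' : h x ≤ h y := hmon (Set.left_mem_Icc.mpr hxy) (Set.right_mem_Icc.mpr hxy) hxy
  have hby : h y ≤ B * Real.exp (-(r*y)) :=
    mul_le_mul_of_nonneg_right hgy (Real.exp_pos _).le
  have hx' : g x * Real.exp (-(r*x)) ≤ B * Real.exp (-(r*y)) := le_trans hxy' hby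
  have h2 : g x * Real.exp (-(r*x)) * Real.exp (r*x) ≤ B * Real.exp (-(r*y)) * Real.exp (r*x) :=
    mul_le_mul_of_nonneg_right hx' (Real.exp_pos _).le
  calc g x = g x * Real.exp (-(r*x)) * Real.exp (r*x) := by
        rw [mul_assoc, ← Real.exp_add]; simp
    _ ≤ B * Real.exp (-(r*y)) * Real.exp (r*x) := h2
    _ = B * Real.exp (-(r * (y - x))) := by
        rw [mul_assoc, ← Real.exp_add]; ring_nf

set_option maxHeartbeats 2000000 in
theorem sharp_threshold_from_differential_inequality
    (a b M c₀ : ℝ) (ha : 0 < a) (hab : a ≤ b) (hM : 0 < M) (hc₀ : 0 < c₀)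
    (f : ℕ → ℝ → ℝ)
    (hmono : ∀ n : ℕ, MonotoneOn (f n) (Set.Icc a b))
    (hdiff : ∀ n : ℕ, 1 ≤ n → DifferentiableOn ℝ (f n) (Set.Icc a b))
    (hbdd : ∀ n : ℕ, ∀ lam ∈ Set.Icc a b, f n lam ∈ Set.Icc (0 : ℝ) M)
    (hineq : ∀ n : ℕ, 1 ≤ n → ∀ lam ∈ Set.Icc a b,
      f n lam ≤ c₀ * ((∑ k ∈ Finset.range n, f k lam) / n) * deriv (f n) lam)
    (hanti : ∀ n : ℕ, ∀ lam ∈ Set.Icc a b, f (n + 1) lam ≤ f n lam) :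
    ∃ lamStar ∈ Set.Icc a b,
      (∀ lam ∈ Set.Icc a b, lam < lamStar →
        ∃ M' > (0 : ℝ), ∃ c > (0 : ℝ), ∀ n : ℕ, f n lam ≤ M' * Real.exp (-(c * n))) ∧
      (∃ C > (0 : ℝ), ∀ lam ∈ Set.Icc a b, lamStar < lam →
        C * (lam - lamStar) ≤ ⨅ n : ℕ, f n lam) := by
  classical
  set S : ℕ → ℝ → ℝ := fun n lam => ∑ k ∈ Finset.range n, f k lam with hSdef
  have hf0le : ∀ n, ∀ lam ∈ Set.Icc a b, 0 ≤ f n lam := fun n lam h => (hbdd n lam h).1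
  have hfleM : ∀ n, ∀ lam ∈ Set.Icc a b, f n lam ≤ M := fun n lam h => (hbdd n lam h).2
  have hSmono : ∀ n, MonotoneOn (S n) (Set.Icc a b) := by
    intro n x hx y hy hxy
    exact Finset.sum_le_sum (fun k _ => hmono k hx hy hxy)
  have hS0 : ∀ n, ∀ lam ∈ Set.Icc a b, 0 ≤ S n lam := by
    intro n lam h
    exact Finset.sum_nonneg (fun k _ => hf0le k lam h)
  have hcont : ∀ n, 1 ≤ n → ContinuousOn (f n) (Set.Icc a b) :=
    fun n hn => (hdiff n hn).continuousOn
  have hanti' : ∀ lam ∈ Set.Icc a b, ∀ m n : ℕ, m ≤ n → f n lam ≤ f m lam := by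
    intro lam hl m n hmn
    induction n, hmn using Nat.le_induction with
    | base => exact le_refl _
    | succ n hmn ih => exact le_trans (hanti n lam hl) ih
  have hzero : ∀ lam ∈ Set.Icc a b, f 0 lam = 0 → ∀ n, f n lam = 0 := by
    intro lam hl h0 n
    induction n using Nat.strong_induction_on with
    | _ n ih =>
      rcases Nat.eq_zero_or_pos n with rfl | hn
      · exact h0
      · have hs : (∑ k ∈ Finset.range n, f k lam) = 0 :=
          Finset.sum_eq_zero (fun k hk => ih k (Finset.mem_range.mp hk))
        have h1 := hineq n hn lam hl
        rw [hs] at h1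
        simp only [zero_div, mul_zero, zero_mul] at h1
        exact le_antisymm h1 (hf0le n lam hl)
  have hderivge : ∀ n : ℕ, 1 ≤ n → ∀ μ, a < μ → μ < b → ∀ A : ℝ, 0 < A → S n μ ≤ A →
      ((n:ℝ)/(c₀*A)) * f n μ ≤ deriv (f n) μ := by
    intro n hn μ haμ hμb A hA hSA
    have hμmem : μ ∈ Set.Icc a b := ⟨haμ.le, hμb.le⟩
    have hdAt : DifferentiableAt ℝ (f n) μ :=
      (hdiff n hn μ hμmem).differentiableAt (Icc_mem_nhds haμ hμb)
    rcases eq_or_lt_of_le (hf0le n μ hμmem) with h0 | hpos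
    · rw [← h0, mul_zero]
      exact deriv_nonneg_of_monotoneOn hμmem.1 hμb (hmono n) hdAt.hasDerivAt
    · have hq : f n μ ≤ c₀ * (S n μ / n) * deriv (f n) μ := hineq n hn μ hμmem
      have hnpos : (0:ℝ) < n := by exact_mod_cast hn
      have hS : 0 < S n μ := by
        by_contra h
        push_neg at h
        have hS0' : S n μ = 0 := le_antisymm h (hS0 n μ hμmem)
        rw [hS0'] at hq
        simp only [zero_div, mul_zero, zero_mul] at hq
        linarith
      have hd1 : (n:ℝ) * f n μ / (c₀ * S n μ) ≤ deriv (f n) μ := by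
        rw [div_le_iff₀ (by positivity)]
        have : c₀ * (S n μ / n) * deriv (f n) μ * n = c₀ * S n μ * deriv (f n) μ := by
          field_simp
        nlinarith [hq]
      calc ((n:ℝ)/(c₀*A)) * f n μ = (n:ℝ) * f n μ / (c₀ * A) := by ring
        _ ≤ (n:ℝ) * f n μ / (c₀ * S n μ) :=
            div_le_div_of_nonneg_left (by positivity) (by positivity)
              (by nlinarith)
        _ ≤ deriv (f n) μ := hd1
  set P : ℝ → Prop := fun x => ∃ δ > (0:ℝ), ∃ N : ℕ, ∀ n ≥ N, S n x ≤ (n:ℝ)^((1:ℝ)-δ)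
    with hPdef
  set E : Set ℝ := {x | x ∈ Set.Icc a b ∧ ¬ P x} ∪ {b} with hEdef
  have hbE : b ∈ E := Or.inr rfl
  have hEne : E.Nonempty := ⟨b, hbE⟩
  have hEbdd : BddBelow E := by
    refine ⟨a, fun x hx => ?_⟩
    rcases hx with ⟨hx1, _⟩ | hx
    · exact hx1.1
    · rw [Set.mem_singleton_iff] at hx; rw [hx]; exact hab
  set lamStar : ℝ := sInf E with hlamStarDef
  have hlamStar_le_b : lamStar ≤ b := csInf_le hEbdd hbE
  have ha_le_lamStar : a ≤ lamStar := by
    apply le_csInf hEne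
    intro x hx
    rcases hx with ⟨hx1, _⟩ | hx
    · exact hx1.1
    · rw [Set.mem_singleton_iff] at hx; rw [hx]; exact hab
  refine ⟨lamStar, ⟨ha_le_lamStar, hlamStar_le_b⟩, ?_, ?_⟩
  · -- Part (i): exponential decay below lamStar
    intro lam hlam hlt
    set l1 : ℝ := (lam + lamStar)/2 with hl1def
    set l2 : ℝ := (lam + l1)/2 with hl2def
    have h12 : lam < l1 := by rw [hl1def]; linarith
    have h1s : l1 < lamStar := by rw [hl1def]; linarith
    have h22 : lam < l2 := by rw [hl2def]; linarith
    have h21 : l2 < l1 := by rw [hl2def]; linarith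
    have hl1mem : l1 ∈ Set.Icc a b := ⟨by linarith [hlam.1], by linarith⟩
    have hl2mem : l2 ∈ Set.Icc a b := ⟨by linarith [hlam.1], by linarith⟩
    have hPl1 : P l1 := by
      by_contra hP
      have hmem : l1 ∈ E := Or.inl ⟨hl1mem, hP⟩
      have := csInf_le hEbdd hmem
      rw [← hlamStarDef] at this
      linarith
    obtain ⟨δ, hδ, N0, hN⟩ := hPl1
    set N : ℕ := max N0 1 with hNdef
    have hN1 : 1 ≤ N := le_max_right _ _
    set cs : ℝ := (l1 - l2)/c₀ with hcsdef
    have hcs : 0 < cs := div_pos (by linarith) hc₀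
    have stretched : ∀ n : ℕ, N ≤ n → f n l2 ≤ M * Real.exp (-(cs * (n:ℝ)^δ)) := by
      intro n hn
      have hn1 : 1 ≤ n := le_trans hN1 hn
      have hnN0 : N0 ≤ n := le_trans (le_max_left _ _) hn
      have hnpos : (0:ℝ) < (n:ℝ) := by exact_mod_cast hn1
      have hApos : (0:ℝ) < (n:ℝ)^((1:ℝ)-δ) := Real.rpow_pos_of_pos hnpos _
      have hcoeff : (n:ℝ)/(c₀ * (n:ℝ)^((1:ℝ)-δ)) = (n:ℝ)^δ/c₀ := by
        have h1 : (n:ℝ)^((1:ℝ)-δ) * (n:ℝ)^δ = (n:ℝ) := by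
          rw [← Real.rpow_add hnpos]; simp
        rw [div_eq_div_iff (by positivity) hc₀.ne']
        nlinarith [h1]
      have hr : ∀ μ ∈ Set.Ioo l2 l1, ((n:ℝ)^δ/c₀) * f n μ ≤ deriv (f n) μ := by
        intro μ hμ
        have hμmem : μ ∈ Set.Icc a b := ⟨by linarith [hlam.1, hμ.1], by linarith [hμ.2]⟩
        have hSle : S n μ ≤ (n:ℝ)^((1:ℝ)-δ) :=
          le_trans (hSmono n hμmem hl1mem hμ.2.le) (hN n hnN0)
        have h := hderivge n hn1 μ (by linarith [hlam.1, hμ.1]) (by linarith [hμ.2])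
          ((n:ℝ)^((1:ℝ)-δ)) hApos hSle
        rw [hcoeff] at h
        exact h
      have hed := exp_decay_of_deriv_ge h21.le hM.le
        ((hcont n hn1).mono (Set.Icc_subset_Icc hl2mem.1 hl1mem.2))
        (fun μ hμ => (hdiff n hn1 μ ⟨by linarith [hlam.1, hμ.1], by linarith [hμ.2]⟩).differentiableAt
          (Icc_mem_nhds (by linarith [hlam.1, hμ.1]) (by linarith [hμ.2])))
        hr (hfleM n l1 hl1mem)
      have harg : (n:ℝ)^δ/c₀ * (l1 - l2) = cs * (n:ℝ)^δ := by
        rw [hcsdef]; ring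
      rw [harg] at hed
      exact hed
    have hsum : Summable (fun k : ℕ => Real.exp (-(cs * (k:ℝ)^δ))) := summable_exp_rpow hcs hδ
    set Cb : ℝ := N*M + M * (∑' k : ℕ, Real.exp (-(cs * (k:ℝ)^δ))) with hCbdef
    have htsum0 : 0 ≤ ∑' k : ℕ, Real.exp (-(cs * (k:ℝ)^δ)) :=
      tsum_nonneg (fun k => (Real.exp_pos _).le)
    have hCbpos : 0 < Cb := by
      have : (1:ℝ) ≤ (N:ℝ) := by exact_mod_cast hN1
      nlinarith
    have hSbound : ∀ n : ℕ, S n l2 ≤ Cb := by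
      intro n
      have hterm : ∀ k ∈ Finset.range n,
          f k l2 ≤ (if k < N then M else 0) + M * Real.exp (-(cs*(k:ℝ)^δ)) := by
        intro k _
        by_cases hk : k < N
        · simp only [if_pos hk]
          have := hfleM k l2 hl2mem
          nlinarith [(Real.exp_pos (-(cs*(k:ℝ)^δ))).le]
        · simp only [if_neg hk, zero_add]
          exact stretched k (le_of_not_gt hk)
      calc S n l2 ≤ ∑ k ∈ Finset.range n,
            ((if k < N then M else 0) + M * Real.exp (-(cs*(k:ℝ)^δ))) :=
            Finset.sum_le_sum hterm
        _ = (∑ k ∈ Finset.range n, (if k < N then M else 0))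
            + ∑ k ∈ Finset.range n, M * Real.exp (-(cs*(k:ℝ)^δ)) :=
            Finset.sum_add_distrib
        _ ≤ N*M + M * (∑' k : ℕ, Real.exp (-(cs * (k:ℝ)^δ))) := by
            apply add_le_add
            · rw [← Finset.sum_filter]
              have hsub : (Finset.range n).filter (fun k => k < N) ⊆ Finset.range N := by
                intro k hk
                simp only [Finset.mem_filter, Finset.mem_range] at hk ⊢
                exact hk.2
              calc ∑ _k ∈ (Finset.range n).filter (fun k => k < N), M
                  ≤ ∑ _k ∈ Finset.range N, M :=
                    Finset.sum_le_sum_of_subset_of_nonneg hsub (fun _ _ _ => hM.le)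
                _ = N * M := by rw [Finset.sum_const, Finset.card_range, nsmul_eq_mul]
            · rw [← Finset.mul_sum]
              exact mul_le_mul_of_nonneg_left
                (Summable.sum_le_tsum (Finset.range n) (fun k _ => (Real.exp_pos _).le) hsum)
                hM.le
    refine ⟨M, hM, (l2 - lam)/(c₀*Cb), div_pos (by linarith) (mul_pos hc₀ hCbpos), ?_⟩
    intro n
    rcases Nat.eq_zero_or_pos n with rfl | hn
    · simp only [Nat.cast_zero, mul_zero, neg_zero, Real.exp_zero, mul_one]
      exact hfleM 0 lam hlam
    · have hr : ∀ μ ∈ Set.Ioo lam l2, ((n:ℝ)/(c₀*Cb)) * f n μ ≤ deriv (f n) μ := by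
        intro μ hμ
        have hμmem : μ ∈ Set.Icc a b := ⟨by linarith [hlam.1, hμ.1], by linarith [hμ.2]⟩
        have hSle : S n μ ≤ Cb := le_trans (hSmono n hμmem hl2mem hμ.2.le) (hSbound n)
        exact hderivge n hn μ (by linarith [hlam.1, hμ.1]) (by linarith [hμ.2]) Cb hCbpos hSle
      have hed := exp_decay_of_deriv_ge h22.le hM.le
        ((hcont n hn).mono (Set.Icc_subset_Icc hlam.1 hl2mem.2))
        (fun μ hμ => (hdiff n hn μ ⟨by linarith [hlam.1, hμ.1], by linarith [hμ.2]⟩).differentiableAt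
          (Icc_mem_nhds (by linarith [hlam.1, hμ.1]) (by linarith [hμ.2])))
        hr (hfleM n l2 hl2mem)
      have harg : (n:ℝ)/(c₀*Cb) * (l2 - lam) = (l2 - lam)/(c₀*Cb) * (n:ℝ) := by ring
      rw [harg] at hed
      exact hed
  · -- Part (ii): linear lower bound above lamStar
    refine ⟨1/c₀, div_pos one_pos hc₀, ?_⟩
    intro lam hlam hlt
    set L : ℝ := ⨅ n : ℕ, f n lam with hLdef
    have hL0 : 0 ≤ L := le_ciInf (fun n => hf0le n lam hlam)
    have core : ∀ l', l' ∈ Set.Icc a b → l' < lam → ¬ P l' → lam - l' ≤ c₀ * L := by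
      intro l' hl'mem hl'lt hnP
      have hf0pos : 0 < f 0 l' := by
        rcases (hf0le 0 l' hl'mem).lt_or_eq with h | h
        · exact h
        · exfalso
          apply hnP
          refine ⟨1, one_pos, 1, fun n _ => ?_⟩
          have hz : S n l' = 0 :=
            Finset.sum_eq_zero (fun k _ => hzero l' hl'mem h.symm k)
          rw [hz]
          exact Real.rpow_nonneg (Nat.cast_nonneg n) _
      have hSpos : ∀ k : ℕ, 1 ≤ k → ∀ μ ∈ Set.Icc l' b, 0 < S k μ := by
        intro k hk μ hμ
        have hμmem : μ ∈ Set.Icc a b := ⟨hl'mem.1.trans hμ.1, hμ.2⟩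
        have h1 : f 0 l' ≤ f 0 μ := hmono 0 hl'mem hμmem hμ.1
        have h2 : f 0 μ ≤ S k μ :=
          Finset.single_le_sum (f := fun j => f j μ) (fun j _ => hf0le j μ hμmem)
            (Finset.mem_range.mpr hk)
        linarith
      have hfin : ∀ ε : ℝ, 0 < ε → (1-ε) * (lam - l') ≤ c₀ * (L + ε) := by
        intro ε hε
        obtain ⟨K, hK⟩ : ∃ K : ℕ, f K lam < L + ε := by
          apply exists_lt_of_ciInf_lt
          rw [← hLdef]; linarith
        have hKbound : ∀ k : ℕ, K ≤ k → f k lam ≤ L + ε :=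
          fun k hk => le_trans (hanti' lam hlam K k hk) hK.le
        set T : ℕ → ℝ → ℝ := fun n μ => ∑ k ∈ Finset.range n, f (k+1) μ / ((k:ℝ)+1)
          with hTdef
        have hTupper : ∀ n : ℕ, T n lam ≤ K * M + (L+ε) * (Real.log n + 1) := by
          intro n
          have hterm : ∀ k ∈ Finset.range n,
              f (k+1) lam / ((k:ℝ)+1) ≤ (if k+1 ≤ K then M else 0) + (L+ε)/((k:ℝ)+1) := by
            intro k _
            have hkpos : (0:ℝ) < (k:ℝ)+1 := by positivity
            by_cases hk : k+1 ≤ K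
            · simp only [if_pos hk]
              have h1 : f (k+1) lam / ((k:ℝ)+1) ≤ f (k+1) lam :=
                div_le_self (hf0le _ _ hlam) (by linarith)
              have h2 : (0:ℝ) ≤ (L+ε)/((k:ℝ)+1) := by positivity
              linarith [hfleM (k+1) lam hlam]
            · simp only [if_neg hk, zero_add]
              have h3 : f (k+1) lam ≤ L + ε := hKbound (k+1) (by omega)
              gcongr
          calc T n lam ≤ ∑ k ∈ Finset.range n,
                ((if k+1 ≤ K then M else 0) + (L+ε)/((k:ℝ)+1)) := Finset.sum_le_sum hterm
            _ = (∑ k ∈ Finset.range n, (if k+1 ≤ K then M else 0))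
                + ∑ k ∈ Finset.range n, (L+ε)/((k:ℝ)+1) := Finset.sum_add_distrib
            _ ≤ K * M + (L+ε) * (Real.log n + 1) := by
                apply add_le_add
                · rw [← Finset.sum_filter]
                  have hsub : (Finset.range n).filter (fun k => k+1 ≤ K) ⊆ Finset.range K := by
                    intro k hk
                    simp only [Finset.mem_filter, Finset.mem_range] at hk ⊢
                    omega
                  calc ∑ _k ∈ (Finset.range n).filter (fun k => k+1 ≤ K), M
                      ≤ ∑ _k ∈ Finset.range K, M :=
                        Finset.sum_le_sum_of_subset_of_nonneg hsub (fun _ _ _ => hM.le)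
                    _ = K * M := by rw [Finset.sum_const, Finset.card_range, nsmul_eq_mul]
                · have hrw : ∑ k ∈ Finset.range n, (L+ε)/((k:ℝ)+1)
                      = (L+ε) * ∑ k ∈ Finset.range n, (1:ℝ)/((k:ℝ)+1) := by
                    rw [Finset.mul_sum]
                    exact Finset.sum_congr rfl (fun k _ => by rw [div_eq_mul_one_div])
                  rw [hrw]
                  exact mul_le_mul_of_nonneg_left (harmonic_le_log n) (by linarith)
        have hTlower : ∀ n : ℕ, 1 ≤ n →
            ((Real.log (S n l') - Real.log M)/c₀) * (lam - l') ≤ T n lam := by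
          intro n hn
          have hasT : ∀ μ ∈ Set.Ioo l' lam,
              HasDerivAt (T n) (∑ k ∈ Finset.range n, deriv (f (k+1)) μ / ((k:ℝ)+1)) μ := by
            intro μ hμ
            have haμ : a < μ := lt_of_le_of_lt hl'mem.1 hμ.1
            have hμb : μ < b := lt_of_lt_of_le hμ.2 hlam.2
            apply HasDerivAt.fun_sum
            intro k _
            exact ((hdiff (k+1) (by omega) μ ⟨haμ.le, hμb.le⟩).differentiableAt
              (Icc_mem_nhds haμ hμb)).hasDerivAt.div_const _
          have hder : ∀ μ ∈ interior (Set.Icc l' lam),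
              (Real.log (S n l') - Real.log M)/c₀ ≤ deriv (T n) μ := by
            rw [interior_Icc]
            intro μ hμ
            rw [(hasT μ hμ).deriv]
            have haμ : a < μ := lt_of_le_of_lt hl'mem.1 hμ.1
            have hμb : μ < b := lt_of_lt_of_le hμ.2 hlam.2
            have hμmem : μ ∈ Set.Icc a b := ⟨haμ.le, hμb.le⟩
            have hμmem' : μ ∈ Set.Icc l' b := ⟨hμ.1.le, hμb.le⟩
            have hstep' : ∀ k ∈ Finset.range n,
                (Real.log (S (k+2) μ) - Real.log (S (k+1) μ))/c₀
                  ≤ deriv (f (k+1)) μ / ((k:ℝ)+1) := by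
              intro k _
              have hSk : 0 < S (k+1) μ := hSpos (k+1) (by omega) μ hμmem'
              have hSk2 : 0 < S (k+2) μ := hSpos (k+2) (by omega) μ hμmem'
              have hfk : 0 ≤ f (k+1) μ := hf0le _ _ hμmem
              have hder1 := hderivge (k+1) (by omega) μ haμ hμb (S (k+1) μ) hSk le_rfl
              have hcast : ((k+1 : ℕ):ℝ) = (k:ℝ)+1 := by push_cast; ring
              rw [hcast] at hder1
              have hk1 : (0:ℝ) < (k:ℝ)+1 := by positivity
              have h4 : f (k+1) μ / (c₀ * S (k+1) μ) ≤ deriv (f (k+1)) μ / ((k:ℝ)+1) := by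
                rw [div_le_div_iff₀ (by positivity) hk1]
                calc f (k+1) μ * ((k:ℝ)+1) = (((k:ℝ)+1)/(c₀ * S (k+1) μ) * f (k+1) μ)
                      * (c₀ * S (k+1) μ) := by field_simp
                  _ ≤ deriv (f (k+1)) μ * (c₀ * S (k+1) μ) :=
                      mul_le_mul_of_nonneg_right hder1 (by positivity)
              have hlog : Real.log (S (k+2) μ) - Real.log (S (k+1) μ)
                  ≤ f (k+1) μ / S (k+1) μ := by
                have hS21 : S (k+2) μ = S (k+1) μ + f (k+1) μ := Finset.sum_range_succ _ _
                have h5 := Real.log_le_sub_one_of_pos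
                  (show (0:ℝ) < S (k+2) μ / S (k+1) μ by positivity)
                rw [Real.log_div hSk2.ne' hSk.ne'] at h5
                have h6 : S (k+2) μ / S (k+1) μ - 1 = f (k+1) μ / S (k+1) μ := by
                  rw [hS21]; field_simp; ring
                rw [h6] at h5
                linarith
              have h7 : (Real.log (S (k+2) μ) - Real.log (S (k+1) μ))/c₀
                  ≤ f (k+1) μ / (c₀ * S (k+1) μ) := by
                rw [div_le_div_iff₀ hc₀ (by positivity)]
                calc (Real.log (S (k+2) μ) - Real.log (S (k+1) μ)) * (c₀ * S (k+1) μ)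
                    = ((Real.log (S (k+2) μ) - Real.log (S (k+1) μ)) * S (k+1) μ) * c₀ := by
                      ring
                  _ ≤ (f (k+1) μ / S (k+1) μ * S (k+1) μ) * c₀ := by
                      apply mul_le_mul_of_nonneg_right _ hc₀.le
                      exact mul_le_mul_of_nonneg_right hlog hSk.le
                  _ = f (k+1) μ * c₀ := by field_simp
              exact le_trans h7 h4
            have hsum := Finset.sum_le_sum hstep'
            have htel : ∑ k ∈ Finset.range n,
                (Real.log (S (k+2) μ) - Real.log (S (k+1) μ))
                = Real.log (S (n+1) μ) - Real.log (S 1 μ) :=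
              Finset.sum_range_sub (fun i => Real.log (S (i+1) μ)) n
            have hsumdiv : ∑ k ∈ Finset.range n,
                (Real.log (S (k+2) μ) - Real.log (S (k+1) μ))/c₀
                = (Real.log (S (n+1) μ) - Real.log (S 1 μ))/c₀ := by
              rw [← Finset.sum_div, htel]
            rw [hsumdiv] at hsum
            refine le_trans ?_ hsum
            have hSnl' : 0 < S n l' := hSpos n hn l' ⟨le_refl l', hl'mem.2⟩
            have hm1 : S n l' ≤ S (n+1) μ := by
              have hmono1 : S n l' ≤ S n μ := hSmono n hl'mem hμmem hμ.1.le
              have hfn : 0 ≤ f n μ := hf0le n μ hμmem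
              have hsucc : S (n+1) μ = S n μ + f n μ := Finset.sum_range_succ _ _
              linarith
            have hlog1 : Real.log (S n l') ≤ Real.log (S (n+1) μ) :=
              Real.log_le_log hSnl' hm1
            have hS1μ : 0 < S 1 μ := hSpos 1 le_rfl μ hμmem'
            have hS1M : S 1 μ ≤ M := by
              have h12 : S 1 μ = f 0 μ := Finset.sum_range_one _
              rw [h12]; exact hfleM 0 μ hμmem
            have hlog2 : Real.log (S 1 μ) ≤ Real.log M := Real.log_le_log hS1μ hS1M
            gcongr
          have hcontT : ContinuousOn (T n) (Set.Icc l' lam) := by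
            apply continuousOn_finset_sum
            intro k _
            exact ((hcont (k+1) (by omega)).mono
              (Set.Icc_subset_Icc hl'mem.1 hlam.2)).div_const _
          have hdiffT : DifferentiableOn ℝ (T n) (interior (Set.Icc l' lam)) := by
            rw [interior_Icc]
            exact fun μ hμ => ((hasT μ hμ).differentiableAt).differentiableWithinAt
          have hkey := Convex.mul_sub_le_image_sub_of_le_deriv (convex_Icc l' lam)
            hcontT hdiffT hder l' (Set.left_mem_Icc.mpr hl'lt.le) lam
            (Set.right_mem_Icc.mpr hl'lt.le) hl'lt.le
          have hT0 : 0 ≤ T n l' := Finset.sum_nonneg (fun k _ => div_nonneg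
            (hf0le _ _ hl'mem) (by positivity))
          linarith [hkey]
        apply le_of_forall_pos_le_add
        intro η hη
        set B : ℝ := c₀*(K*M) + c₀*(L+ε) + (lam - l') * |Real.log M| with hBdef
        have hd0 : (0:ℝ) ≤ lam - l' := by linarith
        have hBpos : 0 < B := by
          have h13 : (0:ℝ) ≤ (K:ℝ)*M := by positivity
          have h14 : (0:ℝ) ≤ (lam - l') * |Real.log M| := mul_nonneg hd0 (abs_nonneg _)
          nlinarith
        have hnP' : ∀ N : ℕ, ∃ n ≥ N, (n:ℝ)^((1:ℝ)-ε) < S n l' := by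
          intro N
          by_contra hcon
          push_neg at hcon
          exact hnP ⟨ε, hε, N, fun n hn => hcon n hn⟩
        obtain ⟨n, hnN, hSn⟩ := hnP' (max 1 ⌈Real.exp (B/η)⌉₊)
        have hn1 : 1 ≤ n := le_trans (le_max_left _ _) hnN
        have hnpos : (0:ℝ) < n := by exact_mod_cast hn1
        have hlogn : B/η ≤ Real.log n := by
          rw [Real.le_log_iff_exp_le hnpos]
          calc Real.exp (B/η) ≤ (⌈Real.exp (B/η)⌉₊ : ℝ) := Nat.le_ceil _
            _ ≤ (n:ℝ) := by exact_mod_cast le_trans (le_max_right _ _) hnN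
        have hlognpos : 0 < Real.log n :=
          lt_of_lt_of_le (div_pos hBpos hη) hlogn
        have hlogS : (1-ε) * Real.log n ≤ Real.log (S n l') := by
          have h8 : Real.log ((n:ℝ)^((1:ℝ)-ε)) = (1-ε) * Real.log n := Real.log_rpow hnpos _
          have h9 : Real.log ((n:ℝ)^((1:ℝ)-ε)) ≤ Real.log (S n l') :=
            Real.log_le_log (Real.rpow_pos_of_pos hnpos _) hSn.le
          linarith
        have hup := hTupper n
        have hlo := hTlower n hn1
        have hMlog : (lam - l') * Real.log M ≤ (lam - l') * |Real.log M| :=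
          mul_le_mul_of_nonneg_left (le_abs_self _) hd0
        have hmain : (Real.log (S n l') - Real.log M) * (lam - l') ≤
            c₀*(K * M) + c₀*((L+ε) * (Real.log n + 1)) := by
          have h15 := le_trans hlo hup
          have h10 : (Real.log (S n l') - Real.log M)/c₀ * (lam - l') * c₀ ≤
              (K * M + (L+ε) * (Real.log n + 1)) * c₀ :=
            mul_le_mul_of_nonneg_right h15 hc₀.le
          calc (Real.log (S n l') - Real.log M) * (lam - l')
              = (Real.log (S n l') - Real.log M)/c₀ * (lam - l') * c₀ := by
                field_simp
            _ ≤ (K * M + (L+ε) * (Real.log n + 1)) * c₀ := h10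
            _ = c₀*(K * M) + c₀*((L+ε) * (Real.log n + 1)) := by ring
        have hBle : B ≤ η * Real.log n := by
          rw [div_le_iff₀ hη] at hlogn
          linarith
        have h11 : ((1-ε) * (lam - l')) * Real.log n ≤
            (c₀ * (L + ε) + η) * Real.log n := by
          nlinarith [mul_le_mul_of_nonneg_right hlogS hd0, hmain, hMlog, hBle,
            hBdef.le, hBdef.ge]
        have h16 := le_of_mul_le_mul_right h11 hlognpos
        linarith
      apply le_of_forall_pos_le_add
      intro θ hθ
      have hd0 : (0:ℝ) ≤ lam - l' := by linarith
      set ε : ℝ := θ / (c₀ + (lam - l') + 1) with hεdef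
      have hεpos : 0 < ε := div_pos hθ (by linarith)
      have h1 := hfin ε hεpos
      have h2 : ε * (c₀ + (lam - l') + 1) = θ := by
        rw [hεdef]; field_simp
      nlinarith [h1, h2, hεpos, hd0, hL0]
    have hstep : ∀ η : ℝ, 0 < η → lam - lamStar ≤ c₀ * L + η := by
      intro η hη
      have hlt2 : sInf E < min lam (lamStar + η) := by
        rw [← hlamStarDef]
        exact lt_min hlt (by linarith)
      obtain ⟨l', hl'E, hl'lt⟩ := exists_lt_of_csInf_lt hEne hlt2
      have hl'lam : l' < lam := lt_of_lt_of_le hl'lt (min_le_left _ _)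
      have hl'eta : l' < lamStar + η := lt_of_lt_of_le hl'lt (min_le_right _ _)
      rcases hl'E with ⟨hl'mem, hnP⟩ | hl'b
      · have := core l' hl'mem hl'lam hnP
        linarith
      · exfalso
        rw [Set.mem_singleton_iff] at hl'b
        rw [hl'b] at hl'lam
        linarith [hlam.2]
    have hfinal : lam - lamStar ≤ c₀ * L := le_of_forall_pos_le_add hstep
    rw [div_mul_eq_mul_div, one_mul, div_le_iff₀ hc₀]
    linarith
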